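/- For all a, b ∈ ℂ not both zero, the structure-constant matrix of d_5^{a,b} over the rational function field has generic rank 4, and hence N(d_5^{a,b}) = 6 − 4 = 2. -/

import Mathlib

/-!
The principal 4×4 minor on `X₀, X₁, X₂, V` is the square of the Pfaffian
`p = a x₀ y₁ - b x₁ x₃ + (a + b) x₂²`, which is a nonzero polynomial as soon as `(a, b) ≠ 0`;
hence the rank is at least 4. The rows of `X₃` and `Y₁` are multiples of `e_V`,
and `y₁ · row X₀ - x₃ · row X₁ + x₂ · row X₂ = -p · e_V`, so every row lies in the span of the
rows of `X₀, X₁, X₂, V` and the rank is at most 4.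
-/

open MvPolynomial

/-- Entry polynomials (listed direction) of the structure-constant matrix of
`d_5^{a,b}` over `ℂ[x_0,x_1,x_2,x_3,y_1,v]` (variables indexed by `Fin 6`).
Basis: `X_0 ↦ 0, …, X_3 ↦ 3, Y_1 ↦ 4, V ↦ 5`. -/
noncomputable def strABP (a b : ℂ) (i j : ℕ) : MvPolynomial (Fin 6) ℂ :=
  (if i = 0 ∧ (j = 1 ∨ j = 2) then X ((Fin.ofNat 6 j : Fin 6) + 1) else 0) +
  (if i = 1 ∧ j = 2 then X 4 else 0) +
  (if i = 5 ∧ j = 0 then C a * X 0 else 0) +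
  (if i = 5 ∧ j = 1 then C b * X 1 else 0) +
  (if i = 5 ∧ j = 2 then C (a + b) * X 2 else 0) +
  (if i = 5 ∧ j = 3 then C (2 * a + b) * X 3 else 0) +
  (if i = 5 ∧ j = 4 then C (a + 2 * b) * X 4 else 0)

/-- The antisymmetric 6×6 structure-constant matrix of `d_5^{a,b}` over the
rational function field `ℂ(x_0,x_1,x_2,x_3,y_1,v)`. -/
noncomputable def AAB (a b : ℂ) :
    Matrix (Fin 6) (Fin 6) (FractionRing (MvPolynomial (Fin 6) ℂ)) :=
  fun i j =>
    algebraMap (MvPolynomial (Fin 6) ℂ) _ (strABP a b i.1 j.1 - strABP a b j.1 i.1)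

section CommRing

variable {R : Type*} [CommRing R]

theorem det_antisymm_fin_four (p q r s t u : R) :
    !![0, p, q, r; -p, 0, s, t; -q, -s, 0, u; -r, -t, -u, 0].det = (p * u - q * t + r * s) ^ 2 := by
  simp [Matrix.det_succ_row_zero, Fin.sum_univ_succ, Fin.succAbove]
  ring

/-- `x = (x₀, x₁, x₂, x₃, y₁)`; the coordinate `v` occurs in no bracket. -/
def d5Matrix (a b : R) (x : Fin 5 → R) : Matrix (Fin 6) (Fin 6) R :=
  !![0, x 2, x 3, 0, 0, -(a * x 0);
     -x 2, 0, x 4, 0, 0, -(b * x 1);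
     -x 3, -x 4, 0, 0, 0, -((a + b) * x 2);
     0, 0, 0, 0, 0, -((2 * a + b) * x 3);
     0, 0, 0, 0, 0, -((a + 2 * b) * x 4);
     a * x 0, b * x 1, (a + b) * x 2, (2 * a + b) * x 3, (a + 2 * b) * x 4, 0]

def d5Pfaffian (a b : R) (x : Fin 5 → R) : R :=
  a * x 0 * x 4 - b * x 1 * x 3 + (a + b) * x 2 ^ 2

theorem det_d5Matrix_submatrix (a b : R) (x : Fin 5 → R) :
    ((d5Matrix a b x).submatrix ![0, 1, 2, 5] ![0, 1, 2, 5]).det = d5Pfaffian a b x ^ 2 := by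
  convert det_antisymm_fin_four (x 2) (x 3) (-(a * x 0)) (x 4) (-(b * x 1)) (-((a + b) * x 2))
    using 1
  · congr 1
    ext i j
    fin_cases i <;> fin_cases j <;> simp [d5Matrix]
  · rw [d5Pfaffian]
    ring

theorem d5Matrix_row_combination (a b : R) (x : Fin 5 → R) :
    x 4 • d5Matrix a b x 0 - x 3 • d5Matrix a b x 1 + x 2 • d5Matrix a b x 2 =
      -d5Pfaffian a b x • Pi.single 5 1 := by
  ext j
  fin_cases j <;> simp [d5Matrix, d5Pfaffian] <;> ring

theorem d5Matrix_row_three (a b : R) (x : Fin 5 → R) :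
    d5Matrix a b x 3 = -((2 * a + b) * x 3) • Pi.single 5 1 := by
  ext j
  fin_cases j <;> simp [d5Matrix]

theorem d5Matrix_row_four (a b : R) (x : Fin 5 → R) :
    d5Matrix a b x 4 = -((a + 2 * b) * x 4) • Pi.single 5 1 := by
  ext j
  fin_cases j <;> simp [d5Matrix]

theorem map_d5Pfaffian {S : Type*} [CommRing S] (f : R →+* S) (a b : R) (x : Fin 5 → R) :
    f (d5Pfaffian a b x) = d5Pfaffian (f a) (f b) (f ∘ x) := by
  simp [d5Pfaffian]

end CommRing

section Field

variable {K : Type*} [Field K] {a b : K} {x : Fin 5 → K}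

theorem rank_d5Matrix_le_four (h : d5Pfaffian a b x ≠ 0) : (d5Matrix a b x).rank ≤ 4 := by
  set M := d5Matrix a b x
  set S := Submodule.span K (Set.range ![M 0, M 1, M 2, M 5])
  have hsingle : Pi.single 5 1 ∈ S := by
    have h3 : x 4 • M 0 - x 3 • M 1 + x 2 • M 2 ∈ S := by
      refine add_mem (sub_mem ?_ ?_) ?_ <;> refine Submodule.smul_mem _ _ (Submodule.subset_span ?_)
      exacts [⟨0, rfl⟩, ⟨1, rfl⟩, ⟨2, rfl⟩]
    rw [d5Matrix_row_combination] at h3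
    simpa [h] using S.smul_mem (-(d5Pfaffian a b x)⁻¹) h3
  have hrows : ∀ i, M i ∈ S := by
    intro i
    fin_cases i
    · exact Submodule.subset_span ⟨0, rfl⟩
    · exact Submodule.subset_span ⟨1, rfl⟩
    · exact Submodule.subset_span ⟨2, rfl⟩
    · simpa [M, d5Matrix_row_three] using S.smul_mem (-((2 * a + b) * x 3)) hsingle
    · simpa [M, d5Matrix_row_four] using S.smul_mem (-((a + 2 * b) * x 4)) hsingle
    · exact Submodule.subset_span ⟨3, rfl⟩
  calc M.rank = Module.finrank K (Submodule.span K (Set.range M.row)) := M.rank_eq_finrank_span_row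
    _ ≤ Module.finrank K S :=
      Submodule.finrank_mono (Submodule.span_le.2 (Set.range_subset_iff.2 hrows))
    _ ≤ 4 := finrank_range_le_card _

theorem four_le_rank_d5Matrix (h : d5Pfaffian a b x ≠ 0) : 4 ≤ (d5Matrix a b x).rank := by
  have hdet : ((d5Matrix a b x).submatrix ![0, 1, 2, 5] ![0, 1, 2, 5]).det ≠ 0 := by
    rw [det_d5Matrix_submatrix]
    exact pow_ne_zero 2 h
  calc 4 = ((d5Matrix a b x).submatrix ![0, 1, 2, 5] ![0, 1, 2, 5]).rank := by
        rw [Matrix.rank_of_isUnit _ ((Matrix.isUnit_iff_isUnit_det _).2 hdet.isUnit)]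
        simp
    _ ≤ (d5Matrix a b x).rank := Matrix.rank_submatrix_le _ _ _

theorem rank_d5Matrix (h : d5Pfaffian a b x ≠ 0) : (d5Matrix a b x).rank = 4 :=
  (rank_d5Matrix_le_four h).antisymm (four_le_rank_d5Matrix h)

end Field

theorem d5Pfaffian_C_X_ne_zero {k : Type*} [CommRing k] {a b : k} (hab : a ≠ 0 ∨ b ≠ 0) :
    d5Pfaffian (C a) (C b) (fun i : Fin 5 => (X i.castSucc : MvPolynomial (Fin 6) k)) ≠ 0 := by
  intro h
  rcases hab with ha | hb
  · simpa [d5Pfaffian, ha] using congrArg (eval ![1, 0, 0, 0, 1, 0]) h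
  · simpa [d5Pfaffian, hb] using congrArg (eval ![0, 1, 0, 1, 0, 0]) h

local notation "ι" => algebraMap (MvPolynomial (Fin 6) ℂ) (FractionRing (MvPolynomial (Fin 6) ℂ))

theorem AAB_eq_d5Matrix (a b : ℂ) :
    AAB a b = d5Matrix (ι (C a)) (ι (C b)) (ι ∘ fun i : Fin 5 => X i.castSucc) := by
  ext i j
  fin_cases i <;> fin_cases j <;> simp [AAB, strABP, d5Matrix, Fin.ofNat, map_ofNat]

/-- For all `a, b ∈ ℂ` not both zero the structure-constant matrix of `d_5^{a,b}`
has generic rank 4, hence `N(d_5^{a,b}) = 6 − 4 = 2`. -/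
theorem rank_d5ab (a b : ℂ) (hab : ¬(a = 0 ∧ b = 0)) :
    (AAB a b).rank = 4 ∧ 6 - (AAB a b).rank = 2 := by
  have hpf : d5Pfaffian (ι (C a)) (ι (C b)) (ι ∘ fun i : Fin 5 => X i.castSucc) ≠ 0 := by
    rw [← map_d5Pfaffian, map_ne_zero_iff _ (IsFractionRing.injective _ _)]
    exact d5Pfaffian_C_X_ne_zero (not_and_or.1 hab)
  have hrank : (AAB a b).rank = 4 := by
    rw [AAB_eq_d5Matrix]
    exact rank_d5Matrix hpf
  exact ⟨hrank, by rw [hrank]⟩
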